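/- For globular groups G and H, the subgroup P(G⊗H)_n^δ := {v ∈ (G⊗H)_n : π_{n-1}^δ(v) = 0} decomposes as the internal direct sum ⊕_{i+j=n} PG_i^δ ⊗ PH_j^{(-1)^i δ}, where PG_i^δ = {g ∈ G_i : π_{i-1}^δ(g) = 0}. -/

import Mathlib

open scoped TensorProduct

/-- The sign `(-1)^i ε`: `ε` if `i` is even, the opposite sign if `i` is odd. -/
def sflip (i : ℤ) (ε : Bool) : Bool := if Even i then ε else !ε

/-! The identity
`π_n^ε - π_{n-1}^δ = Σ_{i+j=n} (π_i^ε - π_{i-1}^δ) ⊗ (π_j^{(-1)^i ε} - π_{j-1}^{(-1)^i δ})`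
is a telescoping sum on pure tensors. For `v ∈ P(G⊗H)_n^δ` (and `ε = +`) the left side fixes `v`,
so `v` is the sum of its images under the summands on the right. The `i`-th summand maps into
`PG_i^δ ⊗ PH_{n-i}^{(-1)^i δ}`, is the identity there and kills the other summands, which gives
both existence and uniqueness of the decomposition. -/

open Function

lemma sflip_add_one (i : ℤ) (ε : Bool) : sflip (i + 1) ε = sflip i (!ε) := by
  by_cases h : Even i <;> simp [sflip, h]

lemma finsum_sub_sub_one_eq_zero {M : Type*} [AddCommGroup M] {F : ℤ → M}
    (hF : F.HasFiniteSupport) : ∑ᶠ k, (F k - F (k - 1)) = 0 := by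
  have hshift : (fun k => F (k - 1)).HasFiniteSupport :=
    hF.preimage sub_left_injective.injOn
  rw [finsum_sub_distrib hF hshift, sub_eq_zero]
  exact (finsum_comp_equiv (Equiv.subRight 1)).symm

lemma hasFiniteSupport_of_eq_zero_of_lt_or_lt {M : Type*} [Zero M] {F : ℤ → M} (a b : ℤ)
    (h : ∀ k, k < a ∨ b < k → F k = 0) : F.HasFiniteSupport :=
  (Set.finite_Icc a b).subset <| support_subset_iff'.2 fun k hk => h k <| by
    rw [Set.mem_Icc, not_and_or, not_le, not_le] at hk; exact hk

section

variable {G H : Type*} [AddCommGroup G] [AddCommGroup H]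

structure IsGlobular (π : Bool → ℤ → G →+ G) : Prop where
  eq_zero_of_neg : ∀ (ε : Bool) (k : ℤ), k < 0 → π ε k = 0
  comp_of_lt : ∀ (ε δ : Bool) (i j : ℤ), i < j → ∀ x, π ε i (π δ j x) = π ε i x
  comp_of_le : ∀ (ε δ : Bool) (i j : ℤ), j ≤ i → ∀ x, π ε i (π δ j x) = π δ j x

/-- The projection onto `PG_k^δ`, for either sign `ε`. -/
def projP (π : Bool → ℤ → G →+ G) (ε δ : Bool) (k : ℤ) : G →+ G := π ε k - π δ (k - 1)

lemma projP_apply (π : Bool → ℤ → G →+ G) (ε δ : Bool) (k : ℤ) (x : G) :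
    projP π ε δ k x = π ε k x - π δ (k - 1) x := rfl

namespace IsGlobular

variable {π : Bool → ℤ → G →+ G} (hπ : IsGlobular π)
include hπ

lemma apply_of_neg (ε : Bool) {k : ℤ} (hk : k < 0) (x : G) : π ε k x = 0 := by
  rw [hπ.eq_zero_of_neg ε k hk, AddMonoidHom.zero_apply]

lemma projP_of_neg (ε δ : Bool) {k : ℤ} (hk : k < 0) : projP π ε δ k = 0 := by
  ext x
  rw [projP_apply, hπ.apply_of_neg ε hk, hπ.apply_of_neg δ (by omega), sub_self,
    AddMonoidHom.zero_apply]

lemma apply_eq_self_of_le {ε : Bool} {i k : ℤ} (hki : k ≤ i) {x : G} (hx : π true k x = x) :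
    π ε i x = x := by
  rw [← hx, hπ.comp_of_le ε true i k hki]

lemma apply_projP (ε δ : Bool) (k : ℤ) (x : G) : π true k (projP π ε δ k x) = projP π ε δ k x := by
  rw [projP_apply, map_sub, hπ.comp_of_le _ _ _ _ le_rfl, hπ.comp_of_le _ _ _ _ (by omega)]

lemma apply_sub_one_projP (ε δ : Bool) (k : ℤ) (x : G) : π δ (k - 1) (projP π ε δ k x) = 0 := by
  rw [projP_apply, map_sub, hπ.comp_of_lt _ _ _ _ (by omega), hπ.comp_of_le _ _ _ _ le_rfl,
    sub_self]

lemma projP_apply_eq_self {ε δ : Bool} {k : ℤ} {x : G} (hx : π true k x = x)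
    (hx' : π δ (k - 1) x = 0) : projP π ε δ k x = x := by
  rw [projP_apply, hπ.apply_eq_self_of_le le_rfl hx, hx', sub_zero]

lemma projP_apply_eq_zero_of_lt {ε δ : Bool} {i k : ℤ} (hki : k < i) {x : G} (hx : π true k x = x) :
    projP π ε δ i x = 0 := by
  rw [projP_apply, hπ.apply_eq_self_of_le hki.le hx, hπ.apply_eq_self_of_le (by omega) hx, sub_self]

end IsGlobular

/-- The summand `PG_i^δ ⊗ PH_{n-i}^{(-1)^i δ}` of `P(G ⊗ H)_n^δ`. -/
def tensorP (π : Bool → ℤ → G →+ G) (ρ : Bool → ℤ → H →+ H) (δ : Bool) (n i : ℤ) :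
    AddSubgroup (G ⊗[ℤ] H) :=
  AddSubgroup.closure {t : G ⊗[ℤ] H | ∃ (g : G) (h : H),
    π true i g = g ∧ π δ (i - 1) g = 0 ∧
    ρ true (n - i) h = h ∧ ρ (sflip i δ) (n - i - 1) h = 0 ∧
    t = g ⊗ₜ[ℤ] h}

def tensorProjP (π : Bool → ℤ → G →+ G) (ρ : Bool → ℤ → H →+ H) (ε δ : Bool) (n i : ℤ) :
    G ⊗[ℤ] H →ₗ[ℤ] G ⊗[ℤ] H :=
  TensorProduct.map (projP π ε δ i).toIntLinearMap
    (projP ρ (sflip i ε) (sflip i δ) (n - i)).toIntLinearMap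

section Tensor

variable {π : Bool → ℤ → G →+ G} {ρ : Bool → ℤ → H →+ H} (hπ : IsGlobular π) (hρ : IsGlobular ρ)

lemma tensorProjP_tmul (ε δ : Bool) (n i : ℤ) (g : G) (h : H) :
    tensorProjP π ρ ε δ n i (g ⊗ₜ h) =
      projP π ε δ i g ⊗ₜ projP ρ (sflip i ε) (sflip i δ) (n - i) h := rfl

include hπ hρ

lemma tensorProjP_eq_zero_of_notMem {ε δ : Bool} {n i : ℤ} (hi : i ∉ Finset.Icc 0 n) :
    tensorProjP π ρ ε δ n i = 0 := by
  rw [Finset.mem_Icc, not_and_or, not_le, not_le] at hi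
  rcases hi with hi | hi
  · rw [tensorProjP, hπ.projP_of_neg _ _ hi]
    exact TensorProduct.map_zero_left _
  · rw [tensorProjP, hρ.projP_of_neg _ _ (by omega)]
    exact TensorProduct.map_zero_right _

lemma tensorProjP_mem (ε δ : Bool) (n i : ℤ) (w : G ⊗[ℤ] H) :
    tensorProjP π ρ ε δ n i w ∈ tensorP π ρ δ n i := by
  induction w using TensorProduct.induction_on with
  | zero => rw [map_zero]; exact zero_mem _
  | tmul g h =>
    exact AddSubgroup.subset_closure ⟨_, _, hπ.apply_projP .., hπ.apply_sub_one_projP ..,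
      hρ.apply_projP .., hρ.apply_sub_one_projP .., tensorProjP_tmul ..⟩
  | add x y hx hy => rw [map_add]; exact add_mem hx hy

lemma tensorProjP_apply_of_mem {ε δ : Bool} {n i j : ℤ} {w : G ⊗[ℤ] H}
    (hw : w ∈ tensorP π ρ δ n j) : tensorProjP π ρ ε δ n i w = if i = j then w else 0 := by
  induction hw using AddSubgroup.closure_induction with
  | mem t ht =>
    obtain ⟨g, h, hg, hg', hh, hh', rfl⟩ := ht
    rw [tensorProjP_tmul]
    rcases lt_trichotomy i j with hij | rfl | hij
    · rw [hρ.projP_apply_eq_zero_of_lt (by omega) hh, TensorProduct.tmul_zero, if_neg hij.ne]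
    · rw [hπ.projP_apply_eq_self hg hg', hρ.projP_apply_eq_self hh hh', if_pos rfl]
    · rw [hπ.projP_apply_eq_zero_of_lt hij hg, TensorProduct.zero_tmul, if_neg hij.ne']
  | zero => simp
  | add x y _ _ hx hy => rw [map_add, hx, hy]; split_ifs <;> simp
  | neg x _ hx => rw [map_neg, hx]; split_ifs <;> simp

lemma sum_tensorProjP_tmul (ε δ : Bool) (n : ℤ) (g : G) (h : H) :
    ∑ i ∈ Finset.Icc 0 n, tensorProjP π ρ ε δ n i (g ⊗ₜ h) =
      (∑ᶠ k, (π ε k g - π ε (k - 1) g) ⊗ₜ[ℤ] ρ (sflip k ε) (n - k) h) -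
        ∑ᶠ k, (π δ k g - π δ (k - 1) g) ⊗ₜ[ℤ] ρ (sflip k δ) (n - 1 - k) h := by
  set A : ℤ → G ⊗[ℤ] H := fun k => (π ε k g - π ε (k - 1) g) ⊗ₜ ρ (sflip k ε) (n - k) h
  set B : ℤ → G ⊗[ℤ] H := fun k => (π δ k g - π δ (k - 1) g) ⊗ₜ ρ (sflip k δ) (n - 1 - k) h
  set D : ℤ → G ⊗[ℤ] H := fun i => tensorProjP π ρ ε δ n i (g ⊗ₜ h)
  set F : ℤ → G ⊗[ℤ] H := fun k => (π ε k g - π δ k g) ⊗ₜ ρ (sflip (k + 1) ε) (n - k - 1) h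
  -- `F` collects the cross terms: either `δ = ε` and they cancel, or `δ = !ε` and
  -- `sflip_add_one` matches the signs of `F k` and `F (k - 1)`.
  have hstep : ∀ k, A k - B k - D k = F k - F (k - 1) := by
    intro k
    simp only [A, B, D, F, tensorProjP_tmul, projP_apply, sub_add_cancel,
      show n - (k - 1) - 1 = n - k by ring, show n - 1 - k = n - k - 1 by ring]
    rcases Bool.eq_or_eq_not δ ε with rfl | rfl
    · simp only [sub_self, TensorProduct.zero_tmul, TensorProduct.tmul_sub, TensorProduct.sub_tmul]
    · rw [sflip_add_one]
      simp only [TensorProduct.tmul_sub, TensorProduct.sub_tmul]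
      abel
  have hA : A.HasFiniteSupport := hasFiniteSupport_of_eq_zero_of_lt_or_lt 0 n fun k hk => by
    rcases hk with hk | hk
    · simp [A, hπ.apply_of_neg _ hk, hπ.apply_of_neg _ (by omega : k - 1 < 0)]
    · simp [A, hρ.apply_of_neg _ (by omega : n - k < 0)]
  have hB : B.HasFiniteSupport := hasFiniteSupport_of_eq_zero_of_lt_or_lt 0 n fun k hk => by
    rcases hk with hk | hk
    · simp [B, hπ.apply_of_neg _ hk, hπ.apply_of_neg _ (by omega : k - 1 < 0)]
    · simp [B, hρ.apply_of_neg _ (by omega : n - 1 - k < 0)]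
  have hF : F.HasFiniteSupport := hasFiniteSupport_of_eq_zero_of_lt_or_lt 0 n fun k hk => by
    rcases hk with hk | hk
    · simp [F, hπ.apply_of_neg _ hk]
    · simp [F, hρ.apply_of_neg _ (by omega : n - k - 1 < 0)]
  have hD : support D ⊆ Finset.Icc 0 n :=
    support_subset_iff'.2 fun i hi => by simp [D, tensorProjP_eq_zero_of_notMem hπ hρ hi]
  have hABD : ∑ᶠ k, (A k - B k - D k) = 0 := by
    simp only [hstep]
    exact finsum_sub_sub_one_eq_zero hF
  rw [finsum_sub_distrib (f := fun k => A k - B k) (hA.sub hB)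
      ((Finset.finite_toSet _).subset hD),
    finsum_sub_distrib hA hB, sub_eq_zero] at hABD
  rw [← finsum_eq_sum_of_support_subset D hD, hABD]

lemma sub_eq_sum_tensorProjP (πT : Bool → ℤ → G ⊗[ℤ] H →+ G ⊗[ℤ] H)
    (hT : ∀ (ε : Bool) (n : ℤ) (g : G) (h : H), πT ε n (g ⊗ₜ[ℤ] h) =
      ∑ᶠ k : ℤ, (π ε k g - π ε (k - 1) g) ⊗ₜ[ℤ] ρ (sflip k ε) (n - k) h)
    (ε δ : Bool) (n : ℤ) (w : G ⊗[ℤ] H) :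
    πT ε n w - πT δ (n - 1) w = ∑ i ∈ Finset.Icc 0 n, tensorProjP π ρ ε δ n i w := by
  induction w using TensorProduct.induction_on with
  | zero => simp
  | tmul g h => rw [hT, hT, sum_tensorProjP_tmul hπ hρ]
  | add x y hx hy =>
    simp only [map_add, Finset.sum_add_distrib, ← hx, ← hy]
    abel

lemma tensorProjP_sum_of_mem {δ : Bool} {n : ℤ} (ε : Bool) {f : ℤ → G ⊗[ℤ] H}
    (hf : ∀ j, f j ∈ tensorP π ρ δ n j) (hf0 : ∀ j ∉ Finset.Icc 0 n, f j = 0) (i : ℤ) :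
    tensorProjP π ρ ε δ n i (∑ j ∈ Finset.Icc 0 n, f j) = f i := by
  rw [map_sum, Finset.sum_congr rfl fun j _ => tensorProjP_apply_of_mem hπ hρ (hf j),
    Finset.sum_ite_eq]
  split_ifs with hi
  · rfl
  · exact (hf0 i hi).symm

end Tensor

end

theorem tensor_P_direct_sum_general
    {G H : Type*} [AddCommGroup G] [AddCommGroup H]
    (π : Bool → ℤ → G →+ G) (ρ : Bool → ℤ → H →+ H)
    (hπneg : ∀ (ε : Bool) (k : ℤ), k < 0 → π ε k = 0)
    (hρneg : ∀ (ε : Bool) (k : ℤ), k < 0 → ρ ε k = 0)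
    (hπlt : ∀ (ε δ : Bool) (i j : ℤ), i < j → ∀ x, π ε i (π δ j x) = π ε i x)
    (hπle : ∀ (ε δ : Bool) (i j : ℤ), j ≤ i → ∀ x, π ε i (π δ j x) = π δ j x)
    (hρlt : ∀ (ε δ : Bool) (i j : ℤ), i < j → ∀ y, ρ ε i (ρ δ j y) = ρ ε i y)
    (hρle : ∀ (ε δ : Bool) (i j : ℤ), j ≤ i → ∀ y, ρ ε i (ρ δ j y) = ρ δ j y)
    (πT : Bool → ℤ → G ⊗[ℤ] H → G ⊗[ℤ] H)
    (hTadd : ∀ (ε : Bool) (n : ℤ) (a b : G ⊗[ℤ] H),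
      πT ε n (a + b) = πT ε n a + πT ε n b)
    (hTdef : ∀ (ε : Bool) (n : ℤ) (g : G) (h : H),
      πT ε n (g ⊗ₜ[ℤ] h) =
        ∑ᶠ k : ℤ, (π ε k g - π ε (k - 1) g) ⊗ₜ[ℤ] ρ (sflip k ε) (n - k) h)
    (n : ℤ) (δ : Bool) (v : G ⊗[ℤ] H)
    (hv1 : πT true n v = v) (hv2 : πT δ (n - 1) v = 0) :
    ∃! f : ℤ → G ⊗[ℤ] H,
      (∀ i : ℤ, f i ∈ AddSubgroup.closure
          {t : G ⊗[ℤ] H | ∃ (g : G) (h : H),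
            π true i g = g ∧ π δ (i - 1) g = 0 ∧
            ρ true (n - i) h = h ∧ ρ (sflip i δ) (n - i - 1) h = 0 ∧
            t = g ⊗ₜ[ℤ] h}) ∧
      (∀ i : ℤ, i ∉ Finset.Icc 0 n → f i = 0) ∧
      v = ∑ i ∈ Finset.Icc (0 : ℤ) n, f i := by
  have hπ : IsGlobular π := ⟨hπneg, hπlt, hπle⟩
  have hρ : IsGlobular ρ := ⟨hρneg, hρlt, hρle⟩
  have hv : v = ∑ i ∈ Finset.Icc 0 n, tensorProjP π ρ true δ n i v := by
    have := sub_eq_sum_tensorProjP hπ hρ (fun ε m => AddMonoidHom.mk' (πT ε m) (hTadd ε m))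
      hTdef true δ n v
    rwa [AddMonoidHom.mk'_apply, AddMonoidHom.mk'_apply, hv1, hv2, sub_zero] at this
  refine ⟨fun i => tensorProjP π ρ true δ n i v,
    ⟨(tensorProjP_mem hπ hρ true δ n · v), fun i hi => ?_, hv⟩, ?_⟩
  · simp [tensorProjP_eq_zero_of_notMem hπ hρ hi]
  · rintro f ⟨hf, hf0, rfl⟩
    funext i
    exact (tensorProjP_sum_of_mem hπ hρ true hf hf0 i).symm

/-- For globular groups `G`, `H`, the subgroup
`P(G⊗H)_n^δ = {v ∈ (G⊗H)_n : π_{n-1}^δ v = 0}` is the internal direct sum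
`⊕_{i+j=n} PG_i^δ ⊗ PH_j^{(-1)^i δ}`: every such `v` has a unique decomposition
`v = Σ_{i=0}^n w_i` with `w_i` in the subgroup generated by the tensors `g ⊗ h`
with `g ∈ PG_i^δ` and `h ∈ PH_{n-i}^{(-1)^i δ}`. -/
theorem tensor_P_direct_sum
    {G H : Type*} [AddCommGroup G] [AddCommGroup H]
    (π : Bool → ℤ → G →+ G) (ρ : Bool → ℤ → H →+ H)
    (hπneg : ∀ (ε : Bool) (k : ℤ), k < 0 → π ε k = 0)
    (hρneg : ∀ (ε : Bool) (k : ℤ), k < 0 → ρ ε k = 0)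
    (hπlt : ∀ (ε δ : Bool) (i j : ℤ), i < j → ∀ x, π ε i (π δ j x) = π ε i x)
    (hπle : ∀ (ε δ : Bool) (i j : ℤ), j ≤ i → ∀ x, π ε i (π δ j x) = π δ j x)
    (hρlt : ∀ (ε δ : Bool) (i j : ℤ), i < j → ∀ y, ρ ε i (ρ δ j y) = ρ ε i y)
    (hρle : ∀ (ε δ : Bool) (i j : ℤ), j ≤ i → ∀ y, ρ ε i (ρ δ j y) = ρ δ j y)
    (hπar : ∀ x : G, ∃ n : ℤ, π true n x = x)
    (hρar : ∀ y : H, ∃ n : ℤ, ρ true n y = y)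
    (πT : Bool → ℤ → G ⊗[ℤ] H → G ⊗[ℤ] H)
    (hTadd : ∀ (ε : Bool) (n : ℤ) (a b : G ⊗[ℤ] H),
      πT ε n (a + b) = πT ε n a + πT ε n b)
    (hTdef : ∀ (ε : Bool) (n : ℤ) (g : G) (h : H),
      πT ε n (g ⊗ₜ[ℤ] h) =
        ∑ᶠ k : ℤ, (π ε k g - π ε (k - 1) g) ⊗ₜ[ℤ] ρ (sflip k ε) (n - k) h)
    (n : ℤ) (hn : 0 ≤ n) (δ : Bool) (v : G ⊗[ℤ] H)
    (hv1 : πT true n v = v) (hv2 : πT δ (n - 1) v = 0) :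
    ∃! f : ℤ → G ⊗[ℤ] H,
      (∀ i : ℤ, f i ∈ AddSubgroup.closure
          {t : G ⊗[ℤ] H | ∃ (g : G) (h : H),
            π true i g = g ∧ π δ (i - 1) g = 0 ∧
            ρ true (n - i) h = h ∧ ρ (sflip i δ) (n - i - 1) h = 0 ∧
            t = g ⊗ₜ[ℤ] h}) ∧
      (∀ i : ℤ, i ∉ Finset.Icc 0 n → f i = 0) ∧
      v = ∑ i ∈ Finset.Icc (0 : ℤ) n, f i :=
  tensor_P_direct_sum_general π ρ hπneg hρneg hπlt hπle hρlt hρle πT hTadd hTdef n δ v hv1 hv2
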